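/- Assume in addition c_β σ ≥ ν. Then for all integers 1 ≤ k ≤ t, β_{k,t} ≤ (c_β/(k+1)^ν) · ((k+2)/(t+2))^{c_β σ} ≤ 2 c_β/(t+2)^ν. -/

import Mathlib

open Finset Real

/-!
Each factor satisfies `1 - β_l σ ≤ exp (-c_β σ / (l+1)^ν) ≤ exp (-c_β σ / (l+1))
≤ ((l+1)/(l+2))^{c_β σ}`, using `1 - x ≤ e^{-x}`, `ν ≤ 1` and `log (1 + 1/x) ≤ 1/x`; the
product of the right-hand sides telescopes to `((k+2)/(t+2))^{c_β σ}`. For the second bound,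
`ν ≤ c_β σ` lowers the exponent of the ratio (which is at most `1`) to `ν`, and
`(k+2)^ν ≤ (2(k+1))^ν ≤ 2 (k+1)^ν`.
-/

/-- The step size `β_t = c_β/(t+1)^ν`. -/
noncomputable def betaStep (cβ ν : ℝ) (t : ℕ) : ℝ := cβ / ((t : ℝ) + 1) ^ ν

/-- `β_{k,t} = β_k ∏_{l=k+1}^{t} (1 − β_l σ)`. -/
noncomputable def betaKT (cβ σ ν : ℝ) (k t : ℕ) : ℝ :=
  betaStep cβ ν k * ∏ l ∈ Finset.Icc (k + 1) t, (1 - betaStep cβ ν l * σ)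

lemma prod_Icc_succ_div_succ_succ {k t : ℕ} (hkt : k ≤ t) :
    ∏ l ∈ Icc (k + 1) t, ((l : ℝ) + 1) / ((l : ℝ) + 2) = ((k : ℝ) + 2) / ((t : ℝ) + 2) := by
  induction t, hkt using Nat.le_induction with
  | base => simp [div_self (by positivity : (k : ℝ) + 2 ≠ 0)]
  | succ t hkt ih =>
    rw [prod_Icc_succ_top (by omega), ih]
    push_cast
    field_simp
    ring

lemma exp_neg_div_le_rpow_div_add_one {x c : ℝ} (hx : 0 < x) (hc : 0 ≤ c) :
    exp (-(c / x)) ≤ (x / (x + 1)) ^ c := by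
  have hlog : -(1 / x) ≤ log (x / (x + 1)) := by
    have := one_sub_inv_le_log_of_pos (show 0 < x / (x + 1) by positivity)
    rw [inv_div] at this
    convert this using 1
    field_simp
    ring
  rw [rpow_def_of_pos (by positivity), exp_le_exp, mul_comm]
  calc -(c / x) = c * -(1 / x) := by ring
    _ ≤ c * log (x / (x + 1)) := by gcongr

lemma one_sub_div_rpow_le_rpow_div_add_one {x c ν : ℝ} (hx : 1 ≤ x) (hc : 0 ≤ c)
    (hν : ν ≤ 1) : 1 - c / x ^ ν ≤ (x / (x + 1)) ^ c :=
  calc 1 - c / x ^ ν ≤ exp (-(c / x ^ ν)) := one_sub_le_exp_neg _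
    _ ≤ exp (-(c / x)) := by
      gcongr
      exact rpow_le_self_of_one_le hx hν
    _ ≤ (x / (x + 1)) ^ c := exp_neg_div_le_rpow_div_add_one (by linarith) hc

lemma add_one_rpow_le_two_mul_rpow {x ν : ℝ} (hx : 1 ≤ x) (hν0 : 0 ≤ ν) (hν1 : ν ≤ 1) :
    (x + 1) ^ ν ≤ 2 * x ^ ν :=
  calc (x + 1) ^ ν ≤ (2 * x) ^ ν := by gcongr; linarith
    _ = 2 ^ ν * x ^ ν := mul_rpow (by norm_num) (by linarith)
    _ ≤ 2 * x ^ ν := by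
      gcongr
      simpa using rpow_le_self_of_one_le (by norm_num : (1 : ℝ) ≤ 2) hν1

lemma div_rpow_mul_rpow_div_le {c a b ν α : ℝ} (hc : 0 ≤ c) (ha : 0 ≤ a) (hab : a ≤ b)
    (hν0 : 0 ≤ ν) (hν1 : ν ≤ 1) (hνα : ν ≤ α) :
    c / (a + 1) ^ ν * ((a + 2) / (b + 2)) ^ α ≤ 2 * c / (b + 2) ^ ν := by
  have hratio : ((a + 2) / (b + 2)) ^ α ≤ (a + 2) ^ ν / (b + 2) ^ ν := by
    rw [← div_rpow (by linarith) (by linarith)]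
    exact rpow_le_rpow_of_exponent_ge (div_pos (by linarith) (by linarith))
      ((div_le_one (by linarith)).2 (by linarith)) hνα
  have hnum : (a + 2) ^ ν ≤ 2 * (a + 1) ^ ν := by
    simpa [add_assoc, one_add_one_eq_two] using
      add_one_rpow_le_two_mul_rpow (x := a + 1) (by linarith) hν0 hν1
  have hb2 : 0 < (b + 2) ^ ν := rpow_pos_of_pos (by linarith) ν
  calc c / (a + 1) ^ ν * ((a + 2) / (b + 2)) ^ α
      ≤ c / (a + 1) ^ ν * (2 * (a + 1) ^ ν / (b + 2) ^ ν) := by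
        gcongr
        exact hratio.trans (by gcongr)
    _ = 2 * c / (b + 2) ^ ν := by field_simp

lemma prod_one_sub_betaStep_le {cβ σ ν : ℝ} (hν1 : ν ≤ 1) (hc : 0 ≤ cβ * σ) {k t : ℕ}
    (hkt : k ≤ t) (hsmall : ∀ l ∈ Icc (k + 1) t, betaStep cβ ν l * σ ≤ 1) :
    ∏ l ∈ Icc (k + 1) t, (1 - betaStep cβ ν l * σ)
      ≤ (((k : ℝ) + 2) / ((t : ℝ) + 2)) ^ (cβ * σ) := by
  rw [← prod_Icc_succ_div_succ_succ hkt, ← finsetProd_rpow _ _ fun l _ ↦ by positivity]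
  refine prod_le_prod (fun l hl ↦ sub_nonneg.2 (hsmall l hl)) fun l _ ↦ ?_
  have := one_sub_div_rpow_le_rpow_div_add_one (x := (l : ℝ) + 1) (by simp) hc hν1
  rw [betaStep, div_mul_eq_mul_div]
  simpa [add_assoc, one_add_one_eq_two] using this

lemma betaKT_le_mul_rpow {cβ σ ν : ℝ} (hcβ : 0 ≤ cβ) (hν1 : ν ≤ 1) (hc : 0 ≤ cβ * σ)
    {k t : ℕ} (hkt : k ≤ t) (hsmall : ∀ l ∈ Icc (k + 1) t, betaStep cβ ν l * σ ≤ 1) :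
    betaKT cβ σ ν k t ≤ cβ / ((k : ℝ) + 1) ^ ν * (((k : ℝ) + 2) / ((t : ℝ) + 2)) ^ (cβ * σ) :=
  mul_le_mul_of_nonneg_left (prod_one_sub_betaStep_le hν1 hc hkt hsmall) (by
    rw [betaStep]; positivity)

theorem betaKT_le_general (cβ σ ν : ℝ) (hcβ : 0 < cβ)
    (hν : 0 < ν) (hν1 : ν ≤ 1) (t : ℕ)
    (hsmall : ∀ l : ℕ, l ≤ t → betaStep cβ ν l * σ ≤ 1)
    (hcσν : ν ≤ cβ * σ) :
    ∀ k : ℕ, 1 ≤ k → k ≤ t →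
      betaKT cβ σ ν k t
          ≤ cβ / ((k : ℝ) + 1) ^ ν * (((k : ℝ) + 2) / ((t : ℝ) + 2)) ^ (cβ * σ)
        ∧ cβ / ((k : ℝ) + 1) ^ ν * (((k : ℝ) + 2) / ((t : ℝ) + 2)) ^ (cβ * σ)
          ≤ 2 * cβ / ((t : ℝ) + 2) ^ ν := by
  intro k _ hkt
  exact ⟨betaKT_le_mul_rpow hcβ.le hν1 (hν.le.trans hcσν) hkt
      fun l hl ↦ hsmall l (mem_Icc.1 hl).2,
    div_rpow_mul_rpow_div_le hcβ.le k.cast_nonneg (Nat.cast_le.2 hkt) hν.le hν1 hcσν⟩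

/-- if `c_β σ ≥ ν` then for all `1 ≤ k ≤ t`,
`β_{k,t} ≤ (c_β/(k+1)^ν)((k+2)/(t+2))^{c_β σ} ≤ 2 c_β/(t+2)^ν`. -/
theorem betaKT_le (cβ σ ν : ℝ) (hcβ : 0 < cβ) (hσ : 0 < σ) (hσ1 : σ ≤ 1)
    (hν : 0 < ν) (hν1 : ν ≤ 1) (t : ℕ)
    (hsmall : ∀ l : ℕ, l ≤ t → betaStep cβ ν l * σ ≤ 1)
    (hcσν : ν ≤ cβ * σ) :
    ∀ k : ℕ, 1 ≤ k → k ≤ t →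
      betaKT cβ σ ν k t
          ≤ cβ / ((k : ℝ) + 1) ^ ν * (((k : ℝ) + 2) / ((t : ℝ) + 2)) ^ (cβ * σ)
        ∧ cβ / ((k : ℝ) + 1) ^ ν * (((k : ℝ) + 2) / ((t : ℝ) + 2)) ^ (cβ * σ)
          ≤ 2 * cβ / ((t : ℝ) + 2) ^ ν :=
  betaKT_le_general cβ σ ν hcβ hν hν1 t hsmall hcσν
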